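/- There exist ε > 0 and constant real ℓ×ℓ matrices L₀ and L₁ such that P(t) is invertible for all t ∈ (0, ε) and the ℓ×ℓ block (L(t))_{pp} of L(t) satisfies lim_{t→0⁺} t⁻²·( (L(t))_{pp} − L₀ − t·L₁ ) = −2ℓ·B(0) − tr(B(0))·Id_ℓ + (1/2)·tr(A₀⁻¹A₁A₀⁻¹A₁)·Id_ℓ − tr(A₀⁻¹A(0))·Id_ℓ + tr(C₀ᵗA₀⁻¹C₀)·Id_ℓ. -/

import Mathlib

open Matrix Set Filter Topology

section Aux
variable {α β : Type*} [Fintype α] [Fintype β]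

set_option linter.unusedSectionVars false in
lemma trace_fromBlocks' (A : Matrix α α ℝ) (B : Matrix α β ℝ) (C : Matrix β α ℝ)
    (D : Matrix β β ℝ) : (Matrix.fromBlocks A B C D).trace = A.trace + D.trace := by
  simp [Matrix.trace, Fintype.sum_sum_type, Matrix.diag]

lemma toBlocks₁₁_add (X Y : Matrix (α ⊕ β) (α ⊕ β) ℝ) :
    (X + Y).toBlocks₁₁ = X.toBlocks₁₁ + Y.toBlocks₁₁ := rfl

lemma toBlocks₁₁_sub (X Y : Matrix (α ⊕ β) (α ⊕ β) ℝ) :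
    (X - Y).toBlocks₁₁ = X.toBlocks₁₁ - Y.toBlocks₁₁ := rfl

lemma toBlocks₁₁_smul (r : ℝ) (X : Matrix (α ⊕ β) (α ⊕ β) ℝ) :
    (r • X).toBlocks₁₁ = r • X.toBlocks₁₁ := rfl

end Aux

section ContAux
variable {X : Type*} [TopologicalSpace X] {p q r : Type*}

lemma continuousAt_matrix' {f : X → Matrix p q ℝ} {x : X}
    (h : ∀ i j, ContinuousAt (fun t => f t i j) x) : ContinuousAt f x := by
  exact continuousAt_pi.mpr fun i => continuousAt_pi.mpr fun j => h i j

lemma ContinuousAt.matrix_mul' [Fintype q] {f : X → Matrix p q ℝ} {g : X → Matrix q r ℝ} {x : X}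
    (hf : ContinuousAt f x) (hg : ContinuousAt g x) :
    ContinuousAt (fun t => f t * g t) x := by
  have h : Continuous (fun pr : Matrix p q ℝ × Matrix q r ℝ => pr.1 * pr.2) :=
    Continuous.matrix_mul continuous_fst continuous_snd
  exact h.continuousAt.comp (hf.prodMk hg)

set_option linter.unusedSectionVars false in
lemma ContinuousAt.matrix_transpose' {f : X → Matrix p q ℝ} {x : X}
    (hf : ContinuousAt f x) : ContinuousAt (fun t => (f t)ᵀ) x := by
  have h : Continuous (fun M : Matrix p q ℝ => Mᵀ) :=
    Continuous.matrix_transpose continuous_id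
  exact h.continuousAt.comp hf

set_option linter.unusedSectionVars false in
lemma ContinuousAt.matrix_trace' [Fintype q] {f : X → Matrix q q ℝ} {x : X}
    (hf : ContinuousAt f x) : ContinuousAt (fun t => (f t).trace) x := by
  have h : Continuous (fun M : Matrix q q ℝ => M.trace) :=
    Continuous.matrix_trace continuous_id
  exact h.continuousAt.comp hf

lemma ContinuousAt.matrix_inv' [Fintype q] [DecidableEq q] {f : X → Matrix q q ℝ} {x : X}
    (hf : ContinuousAt f x) (hdet : (f x).det ≠ 0) :
    ContinuousAt (fun t => (f t)⁻¹) x := by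
  have hdetc : ContinuousAt (fun t => (f t).det) x :=
    (Continuous.matrix_det continuous_id).continuousAt.comp hf
  have hadjc : ContinuousAt (fun t => (f t).adjugate) x :=
    (Continuous.matrix_adjugate continuous_id).continuousAt.comp hf
  have : ContinuousAt (fun t => ((f t).det)⁻¹ • (f t).adjugate) x :=
    (hdetc.inv₀ hdet).smul hadjc
  simpa [Matrix.inv_def, Ring.inverse_eq_inv'] using this

end ContAux

set_option maxHeartbeats 1000000 in
/-- expansion of the pp-block of L(t). -/
theorem pp_block_second_fundamental_form_limit
    (ℓ m : ℕ) (hℓ : 1 ≤ ℓ) (hm : 1 ≤ m)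
    (A₀ A₁ : Matrix (Fin m) (Fin m) ℝ)
    (C₀ : Matrix (Fin m) (Fin ℓ) ℝ)
    (hA₀pd : A₀.PosDef) (hA₀s : A₀.IsSymm) (hA₁s : A₁.IsSymm)
    (A : ℝ → Matrix (Fin m) (Fin m) ℝ)
    (B : ℝ → Matrix (Fin ℓ) (Fin ℓ) ℝ)
    (C : ℝ → Matrix (Fin m) (Fin ℓ) ℝ)
    (δ : ℝ) (hδ : 0 < δ)
    (hA : ∀ i j, ContDiffOn ℝ (⊤ : ℕ∞) (fun t => A t i j) (Ioo (-δ) δ))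
    (hB : ∀ i j, ContDiffOn ℝ (⊤ : ℕ∞) (fun t => B t i j) (Ioo (-δ) δ))
    (hC : ∀ i j, ContDiffOn ℝ (⊤ : ℕ∞) (fun t => C t i j) (Ioo (-δ) δ))
    (hAs : ∀ t, (A t).IsSymm) (hBs : ∀ t, (B t).IsSymm)
    (P : ℝ → Matrix (Fin ℓ ⊕ Fin m) (Fin ℓ ⊕ Fin m) ℝ)
    (hP : ∀ t, P t = Matrix.fromBlocks
        (t ^ 2 • (1 : Matrix (Fin ℓ) (Fin ℓ) ℝ) + t ^ 4 • B t)
        (t ^ 2 • C₀ + t ^ 3 • C t)ᵀ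
        (t ^ 2 • C₀ + t ^ 3 • C t)
        (A₀ + t • A₁ + t ^ 2 • A t))
    (P' P'' : ℝ → Matrix (Fin ℓ ⊕ Fin m) (Fin ℓ ⊕ Fin m) ℝ)
    (hP' : ∀ t u v, P' t u v = deriv (fun s => P s u v) t)
    (hP'' : ∀ t u v, P'' t u v = deriv (fun s => P' s u v) t)
    (L : ℝ → Matrix (Fin ℓ ⊕ Fin m) (Fin ℓ ⊕ Fin m) ℝ)
    (hL : ∀ t, L t = (-(1 / 4 : ℝ) * Matrix.trace ((P t)⁻¹ * P' t)) • P' t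
        + (1 / 2 : ℝ) • (P' t * (P t)⁻¹ * P' t) - (1 / 2 : ℝ) • P'' t) :
    ∃ ε > (0 : ℝ), ∃ L₀ L₁ : Matrix (Fin ℓ) (Fin ℓ) ℝ,
      (∀ t ∈ Ioo (0 : ℝ) ε, IsUnit (P t)) ∧
      Tendsto (fun t : ℝ => (t ^ 2)⁻¹ • ((L t).toBlocks₁₁ - L₀ - t • L₁))
        (𝓝[>] (0 : ℝ))
        (𝓝 ((-(2 * (ℓ : ℝ))) • B 0
            - Matrix.trace (B 0) • (1 : Matrix (Fin ℓ) (Fin ℓ) ℝ)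
            + ((1 / 2 : ℝ) * Matrix.trace (A₀⁻¹ * A₁ * A₀⁻¹ * A₁)) • (1 : Matrix (Fin ℓ) (Fin ℓ) ℝ)
            - Matrix.trace (A₀⁻¹ * A 0) • (1 : Matrix (Fin ℓ) (Fin ℓ) ℝ)
            + Matrix.trace (C₀ᵀ * A₀⁻¹ * C₀) • (1 : Matrix (Fin ℓ) (Fin ℓ) ℝ))) := by
  have h0mem : (0:ℝ) ∈ Ioo (-δ) δ := by constructor <;> simp [hδ] <;> linarith
  have hIopen : IsOpen (Ioo (-δ) δ) := isOpen_Ioo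
  -- A₀ basics
  have hA0det : A₀.det ≠ 0 := hA₀pd.det_pos.ne'
  have hA0u : IsUnit A₀.det := hA0det.isUnit
  have hA0r : A₀ * A₀⁻¹ = 1 := Matrix.mul_nonsing_inv _ hA0u
  have hA0l : A₀⁻¹ * A₀ = 1 := Matrix.nonsing_inv_mul _ hA0u
  -- derivative matrices
  set Bd : ℝ → Matrix (Fin ℓ) (Fin ℓ) ℝ :=
    fun t => Matrix.of fun i j => deriv (fun s => B s i j) t with hBd
  set Bdd : ℝ → Matrix (Fin ℓ) (Fin ℓ) ℝ :=
    fun t => Matrix.of fun i j => deriv (fun s => Bd s i j) t with hBdd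
  set Cd : ℝ → Matrix (Fin m) (Fin ℓ) ℝ :=
    fun t => Matrix.of fun i j => deriv (fun s => C s i j) t with hCd
  set Ad : ℝ → Matrix (Fin m) (Fin m) ℝ :=
    fun t => Matrix.of fun i j => deriv (fun s => A s i j) t with hAd
  -- smoothness of entry derivatives
  have hBdC : ∀ i j, ContDiffOn ℝ (⊤ : ℕ∞) (fun t => Bd t i j) (Ioo (-δ) δ) := by
    intro i j
    exact (hB i j).deriv_of_isOpen hIopen (by simp)
  have hCdC : ∀ i j, ContDiffOn ℝ (⊤ : ℕ∞) (fun t => Cd t i j) (Ioo (-δ) δ) := by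
    intro i j
    exact (hC i j).deriv_of_isOpen hIopen (by simp)
  have hAdC : ∀ i j, ContDiffOn ℝ (⊤ : ℕ∞) (fun t => Ad t i j) (Ioo (-δ) δ) := by
    intro i j
    exact (hA i j).deriv_of_isOpen hIopen (by simp)
  have hBddC : ∀ i j, ContDiffOn ℝ (⊤ : ℕ∞) (fun t => Bdd t i j) (Ioo (-δ) δ) := by
    intro i j
    exact (hBdC i j).deriv_of_isOpen hIopen (by simp)
  -- HasDerivAt facts
  have hDat : ∀ {f : ℝ → ℝ}, ContDiffOn ℝ (⊤ : ℕ∞) f (Ioo (-δ) δ) → ∀ {t}, t ∈ Ioo (-δ) δ →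
      HasDerivAt f (deriv f t) t := by
    intro f hf t ht
    exact ((hf.contDiffAt (hIopen.mem_nhds ht)).differentiableAt (by simp)).hasDerivAt
  have hBder : ∀ i j {t}, t ∈ Ioo (-δ) δ → HasDerivAt (fun s => B s i j) (Bd t i j) t :=
    fun i j {t} ht => hDat (hB i j) ht
  have hCder : ∀ i j {t}, t ∈ Ioo (-δ) δ → HasDerivAt (fun s => C s i j) (Cd t i j) t :=
    fun i j {t} ht => hDat (hC i j) ht
  have hAder : ∀ i j {t}, t ∈ Ioo (-δ) δ → HasDerivAt (fun s => A s i j) (Ad t i j) t :=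
    fun i j {t} ht => hDat (hA i j) ht
  have hBdder : ∀ i j {t}, t ∈ Ioo (-δ) δ → HasDerivAt (fun s => Bd s i j) (Bdd t i j) t :=
    fun i j {t} ht => hDat (hBdC i j) ht
  -- main definitions
  set E : ℝ → Matrix (Fin m) (Fin m) ℝ := fun t => A₁ + t • A t with hE
  set M : ℝ → Matrix (Fin m) (Fin m) ℝ := fun t => A₀ + t • E t with hM
  set Minv : ℝ → Matrix (Fin m) (Fin m) ℝ := fun t => (M t)⁻¹ with hMinv
  set K : ℝ → Matrix (Fin m) (Fin ℓ) ℝ := fun t => C₀ + t • C t with hK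
  set W : ℝ → Matrix (Fin ℓ) (Fin ℓ) ℝ := fun t => B t - (K t)ᵀ * Minv t * K t with hW
  set T : ℝ → Matrix (Fin ℓ) (Fin ℓ) ℝ := fun t => 1 + t ^ 2 • W t with hT
  set Tinv : ℝ → Matrix (Fin ℓ) (Fin ℓ) ℝ := fun t => (T t)⁻¹ with hTinv
  set Qt : ℝ → Matrix (Fin ℓ) (Fin ℓ) ℝ := fun t => (4:ℝ) • B t + t • Bd t with hQt
  set Qm : ℝ → Matrix (Fin ℓ) (Fin ℓ) ℝ := fun t => (2:ℝ) • (1:Matrix (Fin ℓ) (Fin ℓ) ℝ) + t ^ 2 • Qt t with hQm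
  set Dm : ℝ → Matrix (Fin m) (Fin ℓ) ℝ := fun t => (2:ℝ) • C₀ + (3*t) • C t + t ^ 2 • Cd t with hDm
  set Nt : ℝ → Matrix (Fin m) (Fin m) ℝ := fun t => (2:ℝ) • A t + t • Ad t with hNt
  set Nm : ℝ → Matrix (Fin m) (Fin m) ℝ := fun t => A₁ + t • Nt t with hNm
  set Rm : ℝ → Matrix (Fin ℓ) (Fin ℓ) ℝ := fun t => (12:ℝ) • B t + (8*t) • Bd t + t ^ 2 • Bdd t with hRm
  set V : ℝ → Matrix (Fin ℓ ⊕ Fin m) (Fin ℓ ⊕ Fin m) ℝ := fun t =>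
    Matrix.fromBlocks ((t ^ 2)⁻¹ • Tinv t) (-(Tinv t * (K t)ᵀ * Minv t))
      (-(Minv t * K t * Tinv t)) (Minv t + t ^ 2 • (Minv t * K t * Tinv t * (K t)ᵀ * Minv t)) with hV
  set a1 : ℝ := Matrix.trace (A₀⁻¹ * A₁) with ha1
  set g : ℝ → ℝ := fun t =>
      -2*(W t * Tinv t).trace + (Tinv t * Qt t).trace
      - (Tinv t * (K t)ᵀ * Minv t * Dm t).trace
      - (Minv t * K t * Tinv t * (Dm t)ᵀ).trace
      + (A₀⁻¹ * Nt t).trace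
      - (Minv t * E t * A₀⁻¹ * A₁).trace
      - t * (Minv t * E t * A₀⁻¹ * Nt t).trace
      + t * (Minv t * K t * Tinv t * (K t)ᵀ * Minv t * Nm t).trace with hg
  set H : ℝ → Matrix (Fin ℓ) (Fin ℓ) ℝ := fun t =>
      (-4:ℝ) • (W t * Tinv t) + (2:ℝ) • (Tinv t * Qt t) + (2:ℝ) • (Qt t * Tinv t)
      + t ^ 2 • (Qt t * Tinv t * Qt t)
      - (Dm t)ᵀ * Minv t * K t * Tinv t * Qm t
      - Qm t * Tinv t * (K t)ᵀ * Minv t * Dm t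
      + (Dm t)ᵀ * Minv t * Dm t
      + t ^ 2 • ((Dm t)ᵀ * Minv t * K t * Tinv t * (K t)ᵀ * Minv t * Dm t) with hH
  set G : ℝ → Matrix (Fin ℓ) (Fin ℓ) ℝ := fun t =>
      (-(g t)/2) • (1:Matrix (Fin ℓ) (Fin ℓ) ℝ)
      + (-((ℓ:ℝ)/2) - (a1/4)*t - (t^2/4)*(g t)) • Qt t
      + (1/2:ℝ) • H t - (1/2:ℝ) • Rm t with hG
  -- values at 0
  have hM0 : M 0 = A₀ := by simp [hM]
  have hMinv0 : Minv 0 = A₀⁻¹ := by rw [hMinv]; simp [hM0]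
  have hK0 : K 0 = C₀ := by simp [hK]
  have hT0 : T 0 = 1 := by simp [hT]
  have hTinv0 : Tinv 0 = 1 := by rw [hTinv]; simp [hT0]
  -- continuity at 0
  have hcont : ∀ {pp qq : Type} {f : ℝ → Matrix pp qq ℝ},
      (∀ i j, ContDiffOn ℝ (⊤ : ℕ∞) (fun t => f t i j) (Ioo (-δ) δ)) → ContinuousAt f 0 := by
    intro pp qq f hf
    apply continuousAt_matrix'
    intro i j
    exact (hf i j).continuousOn.continuousAt (hIopen.mem_nhds h0mem)
  have hAc : ContinuousAt A 0 := hcont hA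
  have hBc : ContinuousAt B 0 := hcont hB
  have hCc : ContinuousAt C 0 := hcont hC
  have hBdc : ContinuousAt Bd 0 := hcont hBdC
  have hCdc : ContinuousAt Cd 0 := hcont hCdC
  have hAdc : ContinuousAt Ad 0 := hcont hAdC
  have hBddc : ContinuousAt Bdd 0 := hcont hBddC
  have hEc : ContinuousAt E 0 := continuousAt_const.add (continuousAt_id.smul hAc)
  have hMc : ContinuousAt M 0 := continuousAt_const.add (continuousAt_id.smul hEc)
  have hMinvc : ContinuousAt Minv 0 := by
    apply hMc.matrix_inv'
    rw [hM0]; exact hA0det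
  have hKc : ContinuousAt K 0 := continuousAt_const.add (continuousAt_id.smul hCc)
  have hWc : ContinuousAt W 0 :=
    hBc.sub ((hKc.matrix_transpose'.matrix_mul' hMinvc).matrix_mul' hKc)
  have hTc : ContinuousAt T 0 :=
    continuousAt_const.add (((continuous_pow 2).continuousAt).smul hWc)
  have hTinvc : ContinuousAt Tinv 0 := by
    apply hTc.matrix_inv'
    rw [hT0]; simp
  have hQtc : ContinuousAt Qt 0 := (hBc.const_smul (4:ℝ) : ContinuousAt (fun t => (4:ℝ) • B t) 0).add (continuousAt_id.smul hBdc)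
  have hQmc : ContinuousAt Qm 0 := continuousAt_const.add (((continuous_pow 2).continuousAt).smul hQtc)
  have hDmc : ContinuousAt Dm 0 :=
    (continuousAt_const.add ((continuousAt_const.mul continuousAt_id).smul hCc)).add
      (((continuous_pow 2).continuousAt).smul hCdc)
  have hNtc : ContinuousAt Nt 0 := (hAc.const_smul (2:ℝ) : ContinuousAt (fun t => (2:ℝ) • A t) 0).add (continuousAt_id.smul hAdc)
  have hNmc : ContinuousAt Nm 0 := continuousAt_const.add (continuousAt_id.smul hNtc)
  have hRmc : ContinuousAt Rm 0 :=
    ((hBc.const_smul (12:ℝ) : ContinuousAt (fun t => (12:ℝ) • B t) 0).add ((continuousAt_const.mul continuousAt_id).smul hBdc)).add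
      (((continuous_pow 2).continuousAt).smul hBddc)
  have hgc : ContinuousAt g 0 := by
    apply ContinuousAt.add
    apply ContinuousAt.sub
    apply ContinuousAt.sub
    apply ContinuousAt.add
    apply ContinuousAt.sub
    apply ContinuousAt.sub
    apply ContinuousAt.add
    · exact continuousAt_const.mul (hWc.matrix_mul' hTinvc).matrix_trace'
    · exact (hTinvc.matrix_mul' hQtc).matrix_trace'
    · exact (((hTinvc.matrix_mul' hKc.matrix_transpose').matrix_mul' hMinvc).matrix_mul' hDmc).matrix_trace'
    · exact (((hMinvc.matrix_mul' hKc).matrix_mul' hTinvc).matrix_mul' hDmc.matrix_transpose').matrix_trace'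
    · exact ((continuousAt_const : ContinuousAt (fun _ : ℝ => A₀⁻¹) 0).matrix_mul' hNtc).matrix_trace'
    · exact (((hMinvc.matrix_mul' hEc).matrix_mul' continuousAt_const).matrix_mul'
        continuousAt_const).matrix_trace'
    · exact continuousAt_id.mul (((hMinvc.matrix_mul' hEc).matrix_mul'
        continuousAt_const).matrix_mul' hNtc).matrix_trace'
    · exact continuousAt_id.mul (((((hMinvc.matrix_mul' hKc).matrix_mul' hTinvc).matrix_mul'
        hKc.matrix_transpose').matrix_mul' hMinvc).matrix_mul' hNmc).matrix_trace'
  have hHc : ContinuousAt H 0 := by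
    apply ContinuousAt.add
    apply ContinuousAt.add
    apply ContinuousAt.sub
    apply ContinuousAt.sub
    apply ContinuousAt.add
    apply ContinuousAt.add
    apply ContinuousAt.add
    · exact (hWc.matrix_mul' hTinvc).const_smul (-4:ℝ)
    · exact (hTinvc.matrix_mul' hQtc).const_smul (2:ℝ)
    · exact (hQtc.matrix_mul' hTinvc).const_smul (2:ℝ)
    · exact ((continuous_pow 2).continuousAt).smul ((hQtc.matrix_mul' hTinvc).matrix_mul' hQtc)
    · exact (((hDmc.matrix_transpose'.matrix_mul' hMinvc).matrix_mul' hKc).matrix_mul'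
        hTinvc).matrix_mul' hQmc
    · exact (((hQmc.matrix_mul' hTinvc).matrix_mul' hKc.matrix_transpose').matrix_mul'
        hMinvc).matrix_mul' hDmc
    · exact (hDmc.matrix_transpose'.matrix_mul' hMinvc).matrix_mul' hDmc
    · exact ((continuous_pow 2).continuousAt).smul
        ((((((hDmc.matrix_transpose'.matrix_mul' hMinvc).matrix_mul' hKc).matrix_mul'
          hTinvc).matrix_mul' hKc.matrix_transpose').matrix_mul' hMinvc).matrix_mul' hDmc)
  have hGc : ContinuousAt G 0 := by
    apply ContinuousAt.sub
    apply ContinuousAt.add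
    apply ContinuousAt.add
    · exact (hgc.neg.div_const 2).smul continuousAt_const
    · exact ((((continuousAt_const.sub (continuousAt_const.mul continuousAt_id))).sub
        ((((continuous_pow 2).continuousAt).div_const 4).mul hgc)).smul hQtc)
    · exact hHc.const_smul (1/2:ℝ)
    · exact hRmc.const_smul (1/2:ℝ)
  -- choose ε
  have hdetMc : ContinuousAt (fun t => (M t).det) 0 :=
    (Continuous.matrix_det continuous_id).continuousAt.comp hMc
  have hdetTc : ContinuousAt (fun t => (T t).det) 0 :=
    (Continuous.matrix_det continuous_id).continuousAt.comp hTc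
  have hev : ∀ᶠ t in 𝓝 (0:ℝ), (M t).det ≠ 0 ∧ (T t).det ≠ 0 ∧ t ∈ Ioo (-δ) δ := by
    have h1 : ∀ᶠ t in 𝓝 (0:ℝ), (M t).det ≠ 0 :=
      hdetMc.eventually_ne (by rw [hM0]; exact hA0det)
    have h2 : ∀ᶠ t in 𝓝 (0:ℝ), (T t).det ≠ 0 :=
      hdetTc.eventually_ne (by rw [hT0]; simp)
    have h3 : ∀ᶠ t in 𝓝 (0:ℝ), t ∈ Ioo (-δ) δ :=
      eventually_of_mem (hIopen.mem_nhds h0mem) (fun t ht => ht)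
    exact h1.and (h2.and h3)
  obtain ⟨ε, hεpos, hεball⟩ := Metric.eventually_nhds_iff.mp hev
  have hεmem : ∀ {t : ℝ}, t ∈ Ioo (0:ℝ) ε →
      (M t).det ≠ 0 ∧ (T t).det ≠ 0 ∧ t ∈ Ioo (-δ) δ := by
    intro t ht
    apply hεball
    rw [Real.dist_eq, sub_zero, abs_of_pos ht.1]
    exact ht.2
  -- inverse identities
  have hMr : ∀ {t:ℝ}, (M t).det ≠ 0 → M t * Minv t = 1 :=
    fun h => Matrix.mul_nonsing_inv _ h.isUnit
  have hMl : ∀ {t:ℝ}, (M t).det ≠ 0 → Minv t * M t = 1 :=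
    fun h => Matrix.nonsing_inv_mul _ h.isUnit
  have hTr : ∀ {t:ℝ}, (T t).det ≠ 0 → T t * Tinv t = 1 :=
    fun h => Matrix.mul_nonsing_inv _ h.isUnit
  have hTl : ∀ {t:ℝ}, (T t).det ≠ 0 → Tinv t * T t = 1 :=
    fun h => Matrix.nonsing_inv_mul _ h.isUnit
  have hMinv_id : ∀ {t:ℝ}, (M t).det ≠ 0 →
      Minv t = A₀⁻¹ - t • (Minv t * E t * A₀⁻¹) := by
    intro t h
    have h1 : Minv t * M t = 1 := hMl h
    have h2 : Minv t * A₀ + t • (Minv t * E t) = 1 := by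
      rw [hM] at h1
      simpa [Matrix.mul_add, Matrix.mul_smul] using h1
    calc Minv t = (Minv t * A₀) * A₀⁻¹ := by rw [Matrix.mul_assoc, hA0r, Matrix.mul_one]
      _ = (1 - t • (Minv t * E t)) * A₀⁻¹ := by rw [eq_sub_of_add_eq h2]
      _ = A₀⁻¹ - t • (Minv t * E t * A₀⁻¹) := by
          simp [Matrix.sub_mul, Matrix.smul_mul]
  have hTinv_id : ∀ {t:ℝ}, (T t).det ≠ 0 →
      Tinv t = 1 - t ^ 2 • (W t * Tinv t) := by
    intro t h
    have h1 : T t * Tinv t = 1 := hTr h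
    rw [hT] at h1
    have h2 : Tinv t + t ^ 2 • (W t * Tinv t) = 1 := by
      simpa [Matrix.add_mul, Matrix.smul_mul] using h1
    exact eq_sub_of_add_eq h2
  -- P' block formula
  have hP'blocks : ∀ {t:ℝ}, t ∈ Ioo (-δ) δ →
      P' t = Matrix.fromBlocks (t • Qm t) (t • (Dm t)ᵀ) (t • Dm t) (Nm t) := by
    intro t ht
    funext u v
    cases u with
    | inl i =>
      cases v with
      | inl j =>
        rw [hP' t (Sum.inl i) (Sum.inl j)]
        have hfun : (fun s => P s (Sum.inl i) (Sum.inl j))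
            = fun s => s^2 * (1 : Matrix (Fin ℓ) (Fin ℓ) ℝ) i j + s^4 * B s i j := by
          funext s; rw [hP s]
          simp [Matrix.fromBlocks_apply₁₁, Matrix.add_apply, Matrix.smul_apply, smul_eq_mul]
        rw [hfun]
        have e1 : HasDerivAt (fun s:ℝ => s^2) (2*t) t := by simpa using hasDerivAt_pow 2 t
        have e2 : HasDerivAt (fun s:ℝ => s^4) (4*t^3) t := by simpa using hasDerivAt_pow 4 t
        have h1 : HasDerivAt (fun s:ℝ => s^2 * (1 : Matrix (Fin ℓ) (Fin ℓ) ℝ) i j + s^4 * B s i j)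
            (2*t * (1 : Matrix (Fin ℓ) (Fin ℓ) ℝ) i j + (4*t^3 * B t i j + t^4 * Bd t i j)) t :=
          (e1.mul_const _).add (e2.mul (hBder i j ht))
        rw [h1.deriv]
        simp only [Matrix.fromBlocks_apply₁₁, hQm, hQt, Matrix.add_apply, Matrix.smul_apply,
          smul_eq_mul]
        ring
      | inr j =>
        rw [hP' t (Sum.inl i) (Sum.inr j)]
        have hfun : (fun s => P s (Sum.inl i) (Sum.inr j))
            = fun s => s^2 * C₀ j i + s^3 * C s j i := by
          funext s; rw [hP s]
          simp [Matrix.fromBlocks_apply₁₂, Matrix.transpose_apply, Matrix.add_apply,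
            Matrix.smul_apply, smul_eq_mul]
        rw [hfun]
        have e1 : HasDerivAt (fun s:ℝ => s^2) (2*t) t := by simpa using hasDerivAt_pow 2 t
        have e2 : HasDerivAt (fun s:ℝ => s^3) (3*t^2) t := by simpa using hasDerivAt_pow 3 t
        have h1 : HasDerivAt (fun s:ℝ => s^2 * C₀ j i + s^3 * C s j i)
            (2*t * C₀ j i + (3*t^2 * C t j i + t^3 * Cd t j i)) t :=
          (e1.mul_const _).add (e2.mul (hCder j i ht))
        rw [h1.deriv]
        simp only [Matrix.fromBlocks_apply₁₂, hDm, Matrix.transpose_apply, Matrix.add_apply,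
          Matrix.smul_apply, smul_eq_mul]
        ring
    | inr i =>
      cases v with
      | inl j =>
        rw [hP' t (Sum.inr i) (Sum.inl j)]
        have hfun : (fun s => P s (Sum.inr i) (Sum.inl j))
            = fun s => s^2 * C₀ i j + s^3 * C s i j := by
          funext s; rw [hP s]
          simp [Matrix.fromBlocks_apply₂₁, Matrix.add_apply, Matrix.smul_apply, smul_eq_mul]
        rw [hfun]
        have e1 : HasDerivAt (fun s:ℝ => s^2) (2*t) t := by simpa using hasDerivAt_pow 2 t
        have e2 : HasDerivAt (fun s:ℝ => s^3) (3*t^2) t := by simpa using hasDerivAt_pow 3 t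
        have h1 : HasDerivAt (fun s:ℝ => s^2 * C₀ i j + s^3 * C s i j)
            (2*t * C₀ i j + (3*t^2 * C t i j + t^3 * Cd t i j)) t :=
          (e1.mul_const _).add (e2.mul (hCder i j ht))
        rw [h1.deriv]
        simp only [Matrix.fromBlocks_apply₂₁, hDm, Matrix.add_apply, Matrix.smul_apply,
          smul_eq_mul]
        ring
      | inr j =>
        rw [hP' t (Sum.inr i) (Sum.inr j)]
        have hfun : (fun s => P s (Sum.inr i) (Sum.inr j))
            = fun s => A₀ i j + s * A₁ i j + s^2 * A s i j := by
          funext s; rw [hP s]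
          simp [Matrix.fromBlocks_apply₂₂, Matrix.add_apply, Matrix.smul_apply, smul_eq_mul]
        rw [hfun]
        have e1 : HasDerivAt (fun _:ℝ => A₀ i j) 0 t := hasDerivAt_const t _
        have e2 : HasDerivAt (fun s:ℝ => s) 1 t := hasDerivAt_id t
        have e3 : HasDerivAt (fun s:ℝ => s^2) (2*t) t := by simpa using hasDerivAt_pow 2 t
        have h1 : HasDerivAt (fun s:ℝ => A₀ i j + s * A₁ i j + s^2 * A s i j)
            (0 + 1 * A₁ i j + (2*t * A t i j + t^2 * Ad t i j)) t :=
          (e1.add (e2.mul_const _)).add (e3.mul (hAder i j ht))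
        rw [h1.deriv]
        simp only [Matrix.fromBlocks_apply₂₂, hNm, hNt, Matrix.add_apply, Matrix.smul_apply,
          smul_eq_mul]
        ring
  -- P'' top-left block
  have hP''11 : ∀ {t:ℝ}, t ∈ Ioo (-δ) δ →
      (P'' t).toBlocks₁₁ = (2:ℝ) • (1:Matrix (Fin ℓ) (Fin ℓ) ℝ) + t ^ 2 • Rm t := by
    intro t ht
    funext i j
    show P'' t (Sum.inl i) (Sum.inl j) = _
    rw [hP'' t (Sum.inl i) (Sum.inl j)]
    have hev2 : (fun s => P' s (Sum.inl i) (Sum.inl j)) =ᶠ[𝓝 t]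
        (fun s => 2*s*(1:Matrix (Fin ℓ) (Fin ℓ) ℝ) i j + 4*s^3*B s i j + s^4*Bd s i j) := by
      filter_upwards [hIopen.mem_nhds ht] with s hs
      rw [hP'blocks hs]
      simp only [Matrix.fromBlocks_apply₁₁, hQm, hQt, Matrix.add_apply, Matrix.smul_apply,
        smul_eq_mul]
      ring
    rw [hev2.deriv_eq]
    have e1 : HasDerivAt (fun s:ℝ => 2*s) 2 t := by
      simpa using (hasDerivAt_id t).const_mul (2:ℝ)
    have e3 : HasDerivAt (fun s:ℝ => 4*s^3) (4*(3*t^2)) t := by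
      simpa [mul_comm, mul_assoc, mul_left_comm] using (hasDerivAt_pow 3 t).const_mul (4:ℝ)
    have e4 : HasDerivAt (fun s:ℝ => s^4) (4*t^3) t := by simpa using hasDerivAt_pow 4 t
    have h1 : HasDerivAt
        (fun s:ℝ => 2*s*(1:Matrix (Fin ℓ) (Fin ℓ) ℝ) i j + 4*s^3*B s i j + s^4*Bd s i j)
        (2*(1:Matrix (Fin ℓ) (Fin ℓ) ℝ) i j + (4*(3*t^2)*B t i j + 4*t^3*Bd t i j)
          + (4*t^3*Bd t i j + t^4*Bdd t i j)) t :=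
      ((e1.mul_const _).add (e3.mul (hBder i j ht))).add (e4.mul (hBdder i j ht))
    rw [h1.deriv]
    simp only [hRm, Matrix.add_apply, Matrix.smul_apply, smul_eq_mul]
    ring
  -- P * V = 1
  have hPV : ∀ {t:ℝ}, t ∈ Ioo (0:ℝ) ε → P t * V t = 1 := by
    intro t ht
    obtain ⟨hdM, hdT, htδ⟩ := hεmem ht
    have htne : t ≠ 0 := ne_of_gt ht.1
    have hpm : t ^ 2 • C₀ + t ^ 3 • C t = t ^ 2 • K t := by rw [hK]; module
    have hmm : A₀ + t • A₁ + t ^ 2 • A t = M t := by rw [hM, hE]; module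
    rw [hP t, hpm, hmm, hV, Matrix.fromBlocks_multiply, ← Matrix.fromBlocks_one]
    refine Matrix.fromBlocks_inj.mpr ⟨?_, ?_, ?_, ?_⟩
    · have key : (t^2 • (1:Matrix (Fin ℓ) (Fin ℓ) ℝ) + t^4 • B t) * ((t^2)⁻¹ • Tinv t)
          + (t^2 • K t)ᵀ * (-(Minv t * K t * Tinv t)) = T t * Tinv t := by
        rw [hT, hW]
        simp only [Matrix.transpose_smul, Matrix.smul_mul, Matrix.mul_smul, Matrix.add_mul,
          Matrix.sub_mul, Matrix.mul_assoc, Matrix.one_mul, Matrix.mul_one, Matrix.mul_neg,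
          Matrix.neg_mul, smul_smul, smul_add, smul_sub, smul_neg]
        match_scalars <;> (field_simp; try ring)
      rw [key]; exact hTr hdT
    · have key : (t^2 • (1:Matrix (Fin ℓ) (Fin ℓ) ℝ) + t^4 • B t) * (-(Tinv t * (K t)ᵀ * Minv t))
          + (t^2 • K t)ᵀ * (Minv t + t^2 • (Minv t * K t * Tinv t * (K t)ᵀ * Minv t))
          = t^2 • ((K t)ᵀ * Minv t) - t^2 • (T t * (Tinv t * ((K t)ᵀ * Minv t))) := by
        rw [hT, hW]
        simp only [Matrix.transpose_smul, Matrix.smul_mul, Matrix.mul_smul, Matrix.add_mul,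
          Matrix.mul_add, Matrix.sub_mul, Matrix.mul_assoc, Matrix.one_mul, Matrix.mul_one,
          Matrix.mul_neg, Matrix.neg_mul, smul_smul, smul_add, smul_sub, smul_neg]
        match_scalars <;> (field_simp; try ring)
      rw [key, ← Matrix.mul_assoc, hTr hdT, Matrix.one_mul, sub_self]
    · have key : t^2 • K t * ((t^2)⁻¹ • Tinv t) + M t * (-(Minv t * K t * Tinv t))
          = K t * Tinv t - M t * (Minv t * (K t * Tinv t)) := by
        simp only [Matrix.smul_mul, Matrix.mul_smul, Matrix.mul_neg, Matrix.mul_assoc,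
          smul_smul]
        match_scalars <;> (field_simp; try ring)
      rw [key, ← Matrix.mul_assoc, hMr hdM, Matrix.one_mul, sub_self]
    · have key : t^2 • K t * (-(Tinv t * (K t)ᵀ * Minv t))
          + M t * (Minv t + t^2 • (Minv t * K t * Tinv t * (K t)ᵀ * Minv t))
          = M t * Minv t + t^2 • ((M t * Minv t) * (K t * (Tinv t * ((K t)ᵀ * Minv t))))
            - t^2 • (K t * (Tinv t * ((K t)ᵀ * Minv t))) := by
        simp only [Matrix.smul_mul, Matrix.mul_smul, Matrix.mul_neg, Matrix.mul_add,
          Matrix.mul_assoc, smul_smul]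
        match_scalars <;> (field_simp; try ring)
      rw [key, hMr hdM, Matrix.one_mul]
      simp
  have hVP : ∀ {t:ℝ}, t ∈ Ioo (0:ℝ) ε → V t * P t = 1 :=
    fun ht => mul_eq_one_comm.mp (hPV ht)
  have hPunit : ∀ t ∈ Ioo (0:ℝ) ε, IsUnit (P t) :=
    fun t ht => ⟨⟨P t, V t, hPV ht, hVP ht⟩, rfl⟩
  have hPinv : ∀ {t:ℝ}, t ∈ Ioo (0:ℝ) ε → (P t)⁻¹ = V t :=
    fun ht => Matrix.inv_eq_right_inv (hPV ht)
  -- trace identity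
  have htrace : ∀ {t:ℝ}, t ∈ Ioo (0:ℝ) ε →
      t * (V t * P' t).trace = 2*(ℓ:ℝ) + a1*t + t^2 * g t := by
    intro t ht
    obtain ⟨hdM, hdT, htδ⟩ := hεmem ht
    have htne : t ≠ 0 := ne_of_gt ht.1
    have eT : (Tinv t).trace = (ℓ:ℝ) - t^2 * (W t * Tinv t).trace := by
      conv_lhs => rw [hTinv_id hdT]
      simp [Matrix.trace_sub, Matrix.trace_smul, Matrix.trace_one, smul_eq_mul]
    have eQ : (Tinv t * Qm t).trace = 2*(Tinv t).trace + t^2 * (Tinv t * Qt t).trace := by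
      conv_lhs => rw [hQm]
      simp [Matrix.mul_add, Matrix.mul_smul, Matrix.trace_add, Matrix.trace_smul,
        smul_eq_mul, Matrix.mul_one]
    have eM : (Minv t * Nm t).trace = (A₀⁻¹*A₁).trace + t*(A₀⁻¹*Nt t).trace
        - t*(Minv t * E t * A₀⁻¹ * A₁).trace - t^2*(Minv t * E t * A₀⁻¹ * Nt t).trace := by
      conv_lhs => rw [hMinv_id hdM, hNm]
      simp only [Matrix.sub_mul, Matrix.mul_add, Matrix.smul_mul, Matrix.mul_smul,
        Matrix.trace_add, Matrix.trace_sub, Matrix.trace_smul, smul_eq_mul, smul_smul,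
        Matrix.mul_assoc]
      ring
    rw [hP'blocks htδ, hV, Matrix.fromBlocks_multiply, trace_fromBlocks']
    simp only [Matrix.smul_mul, Matrix.mul_smul, Matrix.neg_mul, Matrix.mul_neg,
      Matrix.add_mul, Matrix.trace_add, Matrix.trace_smul, Matrix.trace_neg, smul_eq_mul,
      smul_smul]
    rw [eQ, eT, eM]
    simp only [hg, ha1]
    simp only [Matrix.mul_assoc]
    field_simp
    ring
  -- the (P' V P') top-left block
  have hX : ∀ {t:ℝ}, t ∈ Ioo (0:ℝ) ε →
      (P' t * V t * P' t).toBlocks₁₁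
        = (4:ℝ) • (1:Matrix (Fin ℓ) (Fin ℓ) ℝ) + t^2 • H t := by
    intro t ht
    obtain ⟨hdM, hdT, htδ⟩ := hεmem ht
    have htne : t ≠ 0 := ne_of_gt ht.1
    rw [Matrix.mul_assoc, hP'blocks htδ, hV, Matrix.fromBlocks_multiply,
      Matrix.fromBlocks_multiply, Matrix.toBlocks_fromBlocks₁₁]
    have key1 : (t • Qm t) * (((t^2)⁻¹ • Tinv t) * (t • Qm t)
          + (-(Tinv t * (K t)ᵀ * Minv t)) * (t • Dm t))
        + (t • (Dm t)ᵀ) * ((-(Minv t * K t * Tinv t)) * (t • Qm t)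
          + (Minv t + t^2 • (Minv t * K t * Tinv t * (K t)ᵀ * Minv t)) * (t • Dm t))
        = Qm t * (Tinv t * Qm t)
          - t^2 • (Qm t * (Tinv t * ((K t)ᵀ * (Minv t * Dm t))))
          - t^2 • ((Dm t)ᵀ * (Minv t * (K t * (Tinv t * Qm t))))
          + t^2 • ((Dm t)ᵀ * (Minv t * Dm t))
          + t^4 • ((Dm t)ᵀ * (Minv t * (K t * (Tinv t * ((K t)ᵀ * (Minv t * Dm t)))))) := by
      simp only [Matrix.smul_mul, Matrix.mul_smul, Matrix.neg_mul, Matrix.mul_neg,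
        Matrix.add_mul, Matrix.mul_add, smul_smul, smul_add, smul_neg, smul_sub,
        Matrix.mul_assoc]
      match_scalars <;> (field_simp; try ring)
    rw [key1]
    have key2 : Qm t * (Tinv t * Qm t) = (4:ℝ) • Tinv t + (2*t^2) • (Tinv t * Qt t)
        + (2*t^2) • (Qt t * Tinv t) + t^4 • (Qt t * (Tinv t * Qt t)) := by
      simp only [hQm, Matrix.mul_add, Matrix.add_mul, Matrix.mul_smul, Matrix.smul_mul,
        Matrix.mul_one, Matrix.one_mul, smul_smul, smul_add, Matrix.mul_assoc]
      module
    have key3 : (4:ℝ) • Tinv t = (4:ℝ) • (1:Matrix (Fin ℓ) (Fin ℓ) ℝ)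
        - (4*t^2) • (W t * Tinv t) := by
      conv_lhs => rw [hTinv_id hdT]
      module
    rw [key2, key3]
    simp only [hH, Matrix.mul_assoc]
    module
  -- KEY expansion of the top-left block of L
  have hKEY : ∀ {t:ℝ}, t ∈ Ioo (0:ℝ) ε →
      (L t).toBlocks₁₁ = ((1:ℝ)-(ℓ:ℝ)) • (1:Matrix (Fin ℓ) (Fin ℓ) ℝ)
        + t • ((-(a1/2)) • (1:Matrix (Fin ℓ) (Fin ℓ) ℝ)) + t^2 • G t := by
    intro t ht
    obtain ⟨hdM, hdT, htδ⟩ := hεmem ht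
    have htne : t ≠ 0 := ne_of_gt ht.1
    have hp11 : (P' t).toBlocks₁₁ = t • Qm t := by
      rw [hP'blocks htδ, Matrix.toBlocks_fromBlocks₁₁]
    have hco : (-(1/4:ℝ) * (V t * P' t).trace) * t
        = -(1/4)*(2*(ℓ:ℝ) + a1*t + t^2*g t) := by
      linear_combination (-(1/4:ℝ)) * htrace ht
    rw [hL t, toBlocks₁₁_sub, toBlocks₁₁_add, toBlocks₁₁_smul, toBlocks₁₁_smul,
      toBlocks₁₁_smul, hPinv ht, hX ht, hP''11 htδ, hp11, smul_smul, hco]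
    simp only [hG, hQm, smul_smul]
    match_scalars <;> ring
  -- values at 0 of the auxiliary data
  have hQt0 : Qt 0 = (4:ℝ) • B 0 := by simp [hQt]
  have hQm0 : Qm 0 = (2:ℝ) • (1:Matrix (Fin ℓ) (Fin ℓ) ℝ) := by simp [hQm]
  have hW0 : W 0 = B 0 - C₀ᵀ * A₀⁻¹ * C₀ := by
    simp only [hW]; rw [hK0, hMinv0]
  have hDm0 : Dm 0 = (2:ℝ) • C₀ := by simp [hDm]
  have hNt0 : Nt 0 = (2:ℝ) • A 0 := by simp [hNt]
  have hNm0 : Nm 0 = A₁ := by simp [hNm]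
  have hRm0 : Rm 0 = (12:ℝ) • B 0 := by simp [hRm]
  have hE0 : E 0 = A₁ := by simp [hE]
  have hg0 : g 0 = 2*(B 0).trace - 2*(C₀ᵀ*A₀⁻¹*C₀).trace + 2*(A₀⁻¹*A 0).trace
      - (A₀⁻¹*A₁*A₀⁻¹*A₁).trace := by
    simp only [hg, hTinv0, hMinv0, hK0, hW0, hQt0, hDm0, hNt0, hNm0, hE0]
    simp only [Matrix.mul_one, Matrix.one_mul, Matrix.transpose_smul, Matrix.mul_smul,
      Matrix.smul_mul, Matrix.sub_mul, Matrix.mul_sub, Matrix.trace_sub, Matrix.trace_add,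
      Matrix.trace_smul, smul_eq_mul]
    rw [Matrix.trace_mul_cycle A₀⁻¹ C₀ C₀ᵀ]
    ring
  have hH0 : H 0 = (12:ℝ) • B 0 := by
    simp only [hH, hTinv0, hMinv0, hK0, hW0, hQt0, hQm0, hDm0]
    simp only [Matrix.mul_one, Matrix.one_mul, Matrix.transpose_smul, Matrix.smul_mul,
      Matrix.mul_smul, Matrix.sub_mul, Matrix.mul_sub, smul_smul, zero_pow, ne_eq,
      OfNat.ofNat_ne_zero, not_false_eq_true, zero_smul, smul_zero, add_zero, sub_zero,
      smul_sub, smul_add]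
    module
  have hG0 : G 0 = (-(2 * (ℓ:ℝ))) • B 0
      - (B 0).trace • (1 : Matrix (Fin ℓ) (Fin ℓ) ℝ)
      + ((1 / 2 : ℝ) * (A₀⁻¹ * A₁ * A₀⁻¹ * A₁).trace) • (1 : Matrix (Fin ℓ) (Fin ℓ) ℝ)
      - (A₀⁻¹ * A 0).trace • (1 : Matrix (Fin ℓ) (Fin ℓ) ℝ)
      + (C₀ᵀ * A₀⁻¹ * C₀).trace • (1 : Matrix (Fin ℓ) (Fin ℓ) ℝ) := by
    simp only [hG, hg0, hQt0, hH0, hRm0]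
    match_scalars <;> ring
  -- conclusion
  refine ⟨ε, hεpos, ((1:ℝ)-(ℓ:ℝ)) • (1:Matrix (Fin ℓ) (Fin ℓ) ℝ),
    (-(a1/2)) • (1:Matrix (Fin ℓ) (Fin ℓ) ℝ), hPunit, ?_⟩
  have hmain : Tendsto G (𝓝[>] (0:ℝ)) (𝓝 (G 0)) := hGc.tendsto.mono_left nhdsWithin_le_nhds
  have heq : G =ᶠ[𝓝[>] (0:ℝ)] (fun t : ℝ => (t ^ 2)⁻¹ • ((L t).toBlocks₁₁
      - ((1:ℝ)-(ℓ:ℝ)) • (1:Matrix (Fin ℓ) (Fin ℓ) ℝ)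
      - t • ((-(a1/2)) • (1:Matrix (Fin ℓ) (Fin ℓ) ℝ)))) := by
    filter_upwards [Ioo_mem_nhdsGT_of_mem (left_mem_Ico.mpr hεpos)] with t ht
    rw [hKEY ht]
    have hcancel : ((1:ℝ)-(ℓ:ℝ)) • (1:Matrix (Fin ℓ) (Fin ℓ) ℝ)
        + t • ((-(a1/2)) • (1:Matrix (Fin ℓ) (Fin ℓ) ℝ)) + t^2 • G t
        - ((1:ℝ)-(ℓ:ℝ)) • (1:Matrix (Fin ℓ) (Fin ℓ) ℝ)
        - t • ((-(a1/2)) • (1:Matrix (Fin ℓ) (Fin ℓ) ℝ)) = t^2 • G t := by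
      abel
    rw [hcancel, smul_smul, inv_mul_cancel₀ (pow_ne_zero 2 (ne_of_gt ht.1)), one_smul]
  exact hG0 ▸ (hmain.congr' heq)
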